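/- A state-finite automaton A is retractable if and only if A is a strong direct sum of finitely many state-finite retractable automata each containing a kernel. -/

import Mathlib

universe u v

/-- The transition function extended to words (`X*`). -/
def deltaStar {A X : Type*} (δ : A → X → A) : A → List X → A
  | a, [] => a
  | a, x :: p => deltaStar δ (δ a x) p

/-- `B` is a subautomaton of the automaton with transition `δ`. -/
def IsSubaut {A X : Type*} (δ : A → X → A) (B : Set A) : Prop :=
  B.Nonempty ∧ ∀ b ∈ B, ∀ x : X, δ b x ∈ B

/-- `φ` is a retract homomorphism of the automaton onto the subautomaton `B`:
a homomorphism of `A` onto `B` leaving the elements of `B` fixed. -/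
def IsRetractHom {A X : Type*} (δ : A → X → A) (B : Set A) (φ : A → A) : Prop :=
  (∀ a, φ a ∈ B) ∧ (∀ b ∈ B, φ b = b) ∧ ∀ a x, φ (δ a x) = δ (φ a) x

/-- `B` is a retract subautomaton. -/
def IsRetract {A X : Type*} (δ : A → X → A) (B : Set A) : Prop :=
  ∃ φ, IsRetractHom δ B φ

/-- An automaton is retractable if every subautomaton is retract. -/
def Retractable {A X : Type*} (δ : A → X → A) : Prop :=
  ∀ B, IsSubaut δ B → IsRetract δ B

/-- Retractability of the subautomaton on the carrier `D` (homomorphisms are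
represented by functions on the ambient state set, restricted to `D`). -/
def RetractableOn {A X : Type*} (δ : A → X → A) (D : Set A) : Prop :=
  ∀ C ⊆ D, IsSubaut δ C →
    ∃ φ : A → A, (∀ a ∈ D, φ a ∈ C) ∧ (∀ c ∈ C, φ c = c) ∧
      ∀ a ∈ D, ∀ x, φ (δ a x) = δ (φ a) x

/-- The principal subautomaton `R(a) = δ(a, X*)` generated by `a`. -/
def Rset {A X : Type*} (δ : A → X → A) (a : A) : Set A :=
  {b | ∃ p : List X, deltaStar δ a p = b}

/-- The `R`-class `R_a = {b : R(b) = R(a)}`. -/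
def Rclass {A X : Type*} (δ : A → X → A) (a : A) : Set A :=
  {b | Rset δ b = Rset δ a}

/-- `R[a] = R(a) − R_a`. -/
def Rideal {A X : Type*} (δ : A → X → A) (a : A) : Set A :=
  Rset δ a \ Rclass δ a

/-- The Rees congruence induced by `B`: two states are related iff they are
equal or both lie in `B`. -/
def reesRel {A : Type*} (B : Set A) (u v : A) : Prop :=
  u = v ∨ (u ∈ B ∧ v ∈ B)

/-- A minimal subautomaton: a subautomaton with no proper subautomaton. -/
def IsMinimalSubaut {A X : Type*} (δ : A → X → A) (B : Set A) : Prop :=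
  IsSubaut δ B ∧ ∀ C ⊆ B, IsSubaut δ C → C = B

/-- The automaton has a kernel: a subautomaton contained in every subautomaton. -/
def HasKernel {A X : Type*} (δ : A → X → A) : Prop :=
  ∃ K, IsSubaut δ K ∧ ∀ B, IsSubaut δ B → K ⊆ B

/-- The principal factor `R{a}` (the Rees factor of `R(a)` modulo `R[a]`,
described via the Rees congruence) is strongly connected. -/
def FactorSC {A X : Type*} (δ : A → X → A) (a : A) : Prop :=
  ∀ b ∈ Rset δ a, ∀ c ∈ Rset δ a,
    ∃ p : List X, p ≠ [] ∧ reesRel (Rideal δ a) (deltaStar δ b p) c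

/-- The principal factor `R{a}` is a strongly trap-connected non-trivial
one-trap automaton (with trap the class of `t`). -/
def FactorSTC {A X : Type*} (δ : A → X → A) (a : A) : Prop :=
  ∃ t ∈ Rset δ a,
    (∀ x, reesRel (Rideal δ a) (δ t x) t) ∧
    (∃ b ∈ Rset δ a, ¬ reesRel (Rideal δ a) b t) ∧
    (∀ b ∈ Rset δ a, (∀ x, reesRel (Rideal δ a) (δ b x) b) → reesRel (Rideal δ a) b t) ∧
    (∀ b ∈ Rset δ a, ∀ c ∈ Rset δ a, ¬ reesRel (Rideal δ a) b t →
      ∃ p : List X, p ≠ [] ∧ reesRel (Rideal δ a) (deltaStar δ b p) c)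

/-- The principal factor `R{a}` is a strongly trapped non-trivial one-trap
automaton (with trap the class of `t`). -/
def FactorST {A X : Type*} (δ : A → X → A) (a : A) : Prop :=
  ∃ t ∈ Rset δ a,
    (∃ b ∈ Rset δ a, ¬ reesRel (Rideal δ a) b t) ∧
    (∀ b ∈ Rset δ a, (∀ x, reesRel (Rideal δ a) (δ b x) b) → reesRel (Rideal δ a) b t) ∧
    (∀ b ∈ Rset δ a, ∀ x, reesRel (Rideal δ a) (δ b x) t)

/-- Semiconnected: every principal factor is strongly connected or strongly
trap-connected. -/
def Semiconnected {A X : Type*} (δ : A → X → A) : Prop :=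
  ∀ a, FactorSC δ a ∨ FactorSTC δ a

/-- The subautomaton on `D` is semiconnected, via the characterization: for
every subautomaton `C ⊆ D` and every `a ∈ C` there are `b ∈ C` and a nonempty
word `p` with `a = δ(b,p)`. -/
def SemiconnectedOn {A X : Type*} (δ : A → X → A) (D : Set A) : Prop :=
  ∀ C ⊆ D, IsSubaut δ C → ∀ a ∈ C, ∃ b ∈ C, ∃ p : List X, p ≠ [] ∧ deltaStar δ b p = a

/-- The automaton is a dilation of its subautomaton `B`. -/
def IsDilationOf {A X : Type*} (δ : A → X → A) (B : Set A) : Prop :=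
  IsSubaut δ B ∧ ∃ φ : A → A, (∀ a, φ a ∈ B) ∧ (∀ b ∈ B, φ b = b) ∧
    ∀ a x, δ a x = δ (φ a) x

/-- Extension of a partial transition function (`none` = the removed trap)
to words. -/
def pStar {C X : Type*} (d : C → X → Option C) : C → List X → Option C
  | a, [] => some a
  | a, x :: p => (d a x).bind fun b => pStar d b p

/-- The data of the Construction: a finite tree `(T, le)` with least element
`i0`; `C i` is the trap-removed part `A⁰ᵢ` of the automaton `Aᵢ`, with partial
transition `d i` (`none` means the trap); `A_{i0}` is strongly connected and
the other `Aᵢ` are non-trivial strongly trap-connected one-trap automata;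
`Φ i j` are the composite partial homomorphisms along covering chains
(given here as coherent data whose covering components satisfy conditions
(ii) and (iii)); `δ'` is the glued transition function on `A = ⋃ A⁰ᵢ`. -/
def ConstructionSpec {X : Type*} (T : Type*) (le : T → T → Prop) (i0 : T)
    (C : T → Type*) (d : ∀ i, C i → X → Option (C i))
    (Φ : ∀ i j, le j i → C i → C j)
    (δ' : (Σ i, C i) → X → Σ i, C i) : Prop :=
  (∀ i, le i i) ∧ (∀ i j, le i j → le j i → i = j) ∧
  (∀ i j k, le i j → le j k → le i k) ∧
  Finite T ∧
  (∀ S : Set T, S.Nonempty → (∃ u, ∀ i ∈ S, le i u) → ∃ g ∈ S, ∀ i ∈ S, le i g) ∧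
  (∀ i, le i0 i) ∧
  Nonempty (C i0) ∧
  (∀ (a : C i0) (x : X), (d i0 a x).isSome) ∧
  (∀ a b : C i0, ∃ p : List X, p ≠ [] ∧ pStar (d i0) a p = some b) ∧
  (∀ i, i ≠ i0 → Nonempty (C i) ∧
    (∀ a b : C i, ∃ p : List X, p ≠ [] ∧ pStar (d i) a p = some b) ∧
    (∀ a : C i, ∃ p : List X, p ≠ [] ∧ pStar (d i) a p = none)) ∧
  (∀ i (h : le i i) (a : C i), Φ i i h a = a) ∧
  (∀ i j k (h1 : le j i) (h2 : le k j) (h3 : le k i) (a : C i),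
    Φ j k h2 (Φ i j h1 a) = Φ i k h3 a) ∧
  (∀ i j (h : le j i), i ≠ j → (∀ k, le j k → le k i → k = j ∨ k = i) →
    (∀ (a : C i) (x : X) (b : C i),
      d i a x = some b → d j (Φ i j h a) x = some (Φ i j h b)) ∧
    ∃ (a : C i) (x : X), d i a x = none ∧ (d j (Φ i j h a) x).isSome) ∧
  (∀ i (a : C i) (x : X), ∃ (j : T) (hj : le j i) (b : C j),
    δ' ⟨i, a⟩ x = ⟨j, b⟩ ∧ d j (Φ i j hj a) x = some b ∧
    ∀ k (hk : le k i), (d k (Φ i k hk a) x).isSome → le k j)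

/-! In a finite retractable automaton every principal subautomaton `R(a)` contains exactly one
minimal subautomaton: a retraction onto the union of two of them sends `a`, and with it all of
`R(a)`, into one of them while fixing the other pointwise. Grouping the states by this minimal
subautomaton gives a transition-invariant partition whose blocks have it as their kernel, and a
retraction of the whole automaton onto the kernel of block `j` maps every block into block `j`.

Conversely, given such a decomposition and a subautomaton `B`, a block meeting `B` retracts onto
its part in `B` and any other block is first mapped into a block meeting `B`; these blockwise
maps glue to a retraction onto `B`. -/

section Automaton

variable {A X : Type*} {δ : A → X → A}

def IsHomOn (δ : A → X → A) (D E : Set A) (φ : A → A) : Prop :=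
  Set.MapsTo φ D E ∧ ∀ a ∈ D, ∀ x, φ (δ a x) = δ (φ a) x

theorem IsHomOn.comp {D E F : Set A} {φ ψ : A → A} (hφ : IsHomOn δ E F φ)
    (hψ : IsHomOn δ D E ψ) : IsHomOn δ D F (φ ∘ ψ) :=
  ⟨hφ.1.comp hψ.1, fun a ha x => by
    simp only [Function.comp_apply, hψ.2 a ha x, hφ.2 _ (hψ.1 ha) x]⟩

theorem deltaStar_append (a : A) (p q : List X) :
    deltaStar δ a (p ++ q) = deltaStar δ (deltaStar δ a p) q := by
  induction p generalizing a with
  | nil => rfl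
  | cons x p ih => exact ih (δ a x)

theorem IsSubaut.deltaStar_mem {B : Set A} (hB : IsSubaut δ B) {b : A} (hb : b ∈ B)
    (p : List X) : deltaStar δ b p ∈ B := by
  induction p generalizing b with
  | nil => exact hb
  | cons x p ih => exact ih (hB.2 b hb x)

theorem map_deltaStar {φ : A → A} (hφ : ∀ a x, φ (δ a x) = δ (φ a) x) (a : A) (p : List X) :
    φ (deltaStar δ a p) = deltaStar δ (φ a) p := by
  induction p generalizing a with
  | nil => rfl
  | cons x p ih => exact (ih (δ a x)).trans (congrArg (deltaStar δ · p) (hφ a x))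

theorem mem_Rset_self (a : A) : a ∈ Rset δ a := ⟨[], rfl⟩

theorem isSubaut_Rset (a : A) : IsSubaut δ (Rset δ a) := by
  refine ⟨⟨a, mem_Rset_self a⟩, ?_⟩
  rintro b ⟨p, rfl⟩ x
  exact ⟨p ++ [x], deltaStar_append a p [x]⟩

theorem IsSubaut.Rset_subset {B : Set A} (hB : IsSubaut δ B) {a : A} (ha : a ∈ B) :
    Rset δ a ⊆ B := by
  rintro b ⟨p, rfl⟩
  exact hB.deltaStar_mem ha p

theorem Rset_delta_subset (a : A) (x : X) : Rset δ (δ a x) ⊆ Rset δ a := by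
  rintro b ⟨p, rfl⟩
  exact ⟨x :: p, rfl⟩

theorem mapsTo_Rset {φ : A → A} (hφ : ∀ a x, φ (δ a x) = δ (φ a) x) (a : A) :
    Set.MapsTo φ (Rset δ a) (Rset δ (φ a)) := by
  rintro b ⟨p, rfl⟩
  exact ⟨p, (map_deltaStar hφ a p).symm⟩

theorem IsSubaut.union {B C : Set A} (hB : IsSubaut δ B) (hC : IsSubaut δ C) :
    IsSubaut δ (B ∪ C) :=
  ⟨hB.1.mono Set.subset_union_left, fun b hb x => hb.imp (hB.2 b · x) (hC.2 b · x)⟩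

theorem Retractable.retractableOn (hr : Retractable δ) (D : Set A) : RetractableOn δ D := by
  intro C _ hC
  obtain ⟨φ, hφC, hφfix, hφhom⟩ := hr C hC
  exact ⟨φ, fun a _ => hφC a, hφfix, fun a _ => hφhom a⟩

theorem exists_isMinimalSubaut_subset [Finite A] {B : Set A} (hB : IsSubaut δ B) :
    ∃ K ⊆ B, IsMinimalSubaut δ K := by
  obtain ⟨K, ⟨hKB, hK⟩, hKmin⟩ := Set.exists_min_image {C | C ⊆ B ∧ IsSubaut δ C} Set.ncard
    (Set.toFinite _) ⟨B, subset_rfl, hB⟩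
  exact ⟨K, hKB, hK, fun C hCK hC =>
    Set.eq_of_subset_of_ncard_le hCK (hKmin C ⟨hCK.trans hKB, hC⟩) (Set.toFinite K)⟩

theorem Retractable.isMinimalSubaut_unique (hr : Retractable δ) {a : A} {K₁ K₂ : Set A}
    (h₁ : IsMinimalSubaut δ K₁) (h₂ : IsMinimalSubaut δ K₂)
    (hK₁ : K₁ ⊆ Rset δ a) (hK₂ : K₂ ⊆ Rset δ a) : K₁ = K₂ := by
  obtain ⟨φ, hφU, hφfix, hφhom⟩ := hr _ (h₁.1.union h₂.1)
  have key : ∀ {K L : Set A}, IsMinimalSubaut δ K → IsMinimalSubaut δ L → L ⊆ Rset δ a →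
      L ⊆ K₁ ∪ K₂ → φ a ∈ K → L = K := fun {K L} hK hL hLa hLU hφa =>
    hK.2 L (fun c hc => hφfix c (hLU hc) ▸ hK.1.Rset_subset hφa (mapsTo_Rset hφhom a (hLa hc)))
      hL.1
  rcases hφU a with hφa | hφa
  · exact (key h₁ h₂ hK₂ Set.subset_union_right hφa).symm
  · exact key h₂ h₁ hK₁ Set.subset_union_left hφa

/-- In a retractable automaton this is the kernel of the component containing `a`. -/
noncomputable def minSubautOf [Finite A] (δ : A → X → A) (a : A) : Set A :=
  (exists_isMinimalSubaut_subset (isSubaut_Rset (δ := δ) a)).choose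

variable [Finite A]

theorem minSubautOf_subset_Rset (a : A) : minSubautOf δ a ⊆ Rset δ a :=
  (exists_isMinimalSubaut_subset (isSubaut_Rset a)).choose_spec.1

theorem isMinimalSubaut_minSubautOf (a : A) : IsMinimalSubaut δ (minSubautOf δ a) :=
  (exists_isMinimalSubaut_subset (isSubaut_Rset a)).choose_spec.2

theorem IsSubaut.minSubautOf_subset {C : Set A} (hC : IsSubaut δ C) {c : A} (hc : c ∈ C) :
    minSubautOf δ c ⊆ C :=
  (minSubautOf_subset_Rset c).trans (hC.Rset_subset hc)

theorem minSubautOf_eq_of_mem {a b : A} (hb : b ∈ minSubautOf δ a) :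
    minSubautOf δ b = minSubautOf δ a :=
  (isMinimalSubaut_minSubautOf a).2 _ ((isMinimalSubaut_minSubautOf a).1.minSubautOf_subset hb)
    (isMinimalSubaut_minSubautOf b).1

theorem Retractable.minSubautOf_delta (hr : Retractable δ) (a : A) (x : X) :
    minSubautOf δ (δ a x) = minSubautOf δ a :=
  hr.isMinimalSubaut_unique (isMinimalSubaut_minSubautOf _) (isMinimalSubaut_minSubautOf a)
    ((minSubautOf_subset_Rset _).trans (Rset_delta_subset a x)) (minSubautOf_subset_Rset a)

end Automaton

theorem exists_surjective_fin_eq_iff {α β : Type*} [Finite α] (f : α → β) :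
    ∃ (n : ℕ) (π : α → Fin n), Function.Surjective π ∧ ∀ a b, π a = π b ↔ f a = f b := by
  obtain ⟨n, ⟨e⟩⟩ := Finite.exists_equiv_fin (Set.range f)
  refine ⟨n, e ∘ Set.rangeFactorization f, e.surjective.comp Set.rangeFactorization_surjective,
    fun a b => ?_⟩
  simp only [Function.comp_apply, e.injective.eq_iff, Set.rangeFactorization, Subtype.mk.injEq]

section Decomposition

variable {A X ι : Type*} {δ : A → X → A}

theorem Retractable.exists_fin_decomposition [Finite A] (hr : Retractable δ) :
    ∃ (n : ℕ) (π : A → Fin n), Function.Surjective π ∧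
      (∀ a x, π (δ a x) = π a) ∧
      (∀ i, RetractableOn δ (π ⁻¹' {i})) ∧
      (∀ i, ∃ K : Set A, K ⊆ π ⁻¹' {i} ∧ IsSubaut δ K ∧
        ∀ C ⊆ π ⁻¹' {i}, IsSubaut δ C → K ⊆ C) ∧
      ∀ i j, ∃ φ : A → A, IsHomOn δ (π ⁻¹' {i}) (π ⁻¹' {j}) φ := by
  obtain ⟨n, π, hsurj, hπ⟩ := exists_surjective_fin_eq_iff (minSubautOf δ)
  have mem_fiber {a b : A} : b ∈ π ⁻¹' {π a} ↔ minSubautOf δ b = minSubautOf δ a := hπ b a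
  have kernel_subset_fiber (a : A) : minSubautOf δ a ⊆ π ⁻¹' {π a} :=
    fun b hb => mem_fiber.2 (minSubautOf_eq_of_mem hb)
  refine ⟨n, π, hsurj, fun a x => (hπ _ _).2 (hr.minSubautOf_delta a x),
    fun i => hr.retractableOn _, fun i => ?_, fun i j => ?_⟩
  · obtain ⟨a, rfl⟩ := hsurj i
    refine ⟨minSubautOf δ a, kernel_subset_fiber a, (isMinimalSubaut_minSubautOf a).1,
      fun C hCa hC => ?_⟩
    obtain ⟨c, hc⟩ := hC.1
    rw [← mem_fiber.1 (hCa hc)]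
    exact hC.minSubautOf_subset hc
  · obtain ⟨a, rfl⟩ := hsurj j
    obtain ⟨φ, hφK, -, hφhom⟩ := hr _ (isMinimalSubaut_minSubautOf a).1
    exact ⟨φ, fun b _ => kernel_subset_fiber a (hφK b), fun b _ => hφhom b⟩

variable {π : A → ι} {B : Set A}

theorem IsSubaut.inter_fiber (hB : IsSubaut δ B) (hπδ : ∀ a x, π (δ a x) = π a) {i : ι}
    (hne : (B ∩ π ⁻¹' {i}).Nonempty) : IsSubaut δ (B ∩ π ⁻¹' {i}) :=
  ⟨hne, fun b hb x => ⟨hB.2 b hb.1 x, (hπδ b x).trans hb.2⟩⟩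

theorem exists_isHomOn_fiber (hB : IsSubaut δ B) (hπδ : ∀ a x, π (δ a x) = π a)
    (hret : ∀ i, RetractableOn δ (π ⁻¹' {i}))
    (hhom : ∀ i j, ∃ φ : A → A, IsHomOn δ (π ⁻¹' {i}) (π ⁻¹' {j}) φ) (i : ι) :
    ∃ φ : A → A, IsHomOn δ (π ⁻¹' {i}) B φ ∧ ∀ b ∈ B ∩ π ⁻¹' {i}, φ b = b := by
  have retract_fiber {j : ι} (hne : (B ∩ π ⁻¹' {j}).Nonempty) :
      ∃ φ : A → A, IsHomOn δ (π ⁻¹' {j}) B φ ∧ ∀ b ∈ B ∩ π ⁻¹' {j}, φ b = b := by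
    obtain ⟨φ, hφB, hφfix, hφhom⟩ :=
      hret j _ Set.inter_subset_right (hB.inter_fiber hπδ hne)
    exact ⟨φ, ⟨fun a ha => (hφB a ha).1, hφhom⟩, hφfix⟩
  by_cases hne : (B ∩ π ⁻¹' {i}).Nonempty
  · exact retract_fiber hne
  · obtain ⟨b₀, hb₀⟩ := hB.1
    obtain ⟨φ, hφ, -⟩ := retract_fiber ⟨b₀, hb₀, rfl⟩
    obtain ⟨ψ, hψ⟩ := hhom i (π b₀)
    exact ⟨φ ∘ ψ, hφ.comp hψ, fun b hb => absurd ⟨b, hb⟩ hne⟩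

theorem isRetractHom_of_fiberwise (hπδ : ∀ a x, π (δ a x) = π a) (φ : ι → A → A)
    (hφ : ∀ i, IsHomOn δ (π ⁻¹' {i}) B (φ i)) (hfix : ∀ i, ∀ b ∈ B ∩ π ⁻¹' {i}, φ i b = b) :
    IsRetractHom δ B (fun a => φ (π a) a) :=
  ⟨fun a => (hφ (π a)).1 rfl, fun b hb => hfix (π b) b ⟨hb, rfl⟩,
    fun a x => (congrArg (φ · (δ a x)) (hπδ a x)).trans ((hφ (π a)).2 a rfl x)⟩

theorem retractable_of_fiberwise (hπδ : ∀ a x, π (δ a x) = π a)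
    (hret : ∀ i, RetractableOn δ (π ⁻¹' {i}))
    (hhom : ∀ i j, ∃ φ : A → A, IsHomOn δ (π ⁻¹' {i}) (π ⁻¹' {j}) φ) : Retractable δ := by
  intro B hB
  choose φ hφ hfix using exists_isHomOn_fiber hB hπδ hret hhom
  exact ⟨_, isRetractHom_of_fiberwise hπδ φ hφ hfix⟩

end Decomposition

theorem stmt_8_general {A X : Type*} [Finite A]
    (δ : A → X → A) :
    Retractable δ ↔
      ∃ (n : ℕ) (π : A → Fin n), Function.Surjective π ∧
        (∀ a x, π (δ a x) = π a) ∧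
        (∀ i, RetractableOn δ (π ⁻¹' {i})) ∧
        (∀ i, ∃ K : Set A, K ⊆ π ⁻¹' {i} ∧ IsSubaut δ K ∧
          ∀ C ⊆ π ⁻¹' {i}, IsSubaut δ C → K ⊆ C) ∧
        ∀ i j, ∃ φ : A → A, (∀ a ∈ π ⁻¹' {i}, φ a ∈ π ⁻¹' {j}) ∧
          ∀ a ∈ π ⁻¹' {i}, ∀ x, φ (δ a x) = δ (φ a) x := by
  refine ⟨Retractable.exists_fin_decomposition, ?_⟩
  rintro ⟨n, π, -, hπδ, hret, -, hhom⟩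
  exact retractable_of_fiberwise hπδ hret hhom

/-- Theorem 2, (i) ⇔ (iii). -/
theorem stmt_8 {A X : Type*} [Finite A] [Nonempty A] [Nonempty X]
    (δ : A → X → A) :
    Retractable δ ↔
      ∃ (n : ℕ) (π : A → Fin n), Function.Surjective π ∧
        (∀ a x, π (δ a x) = π a) ∧
        (∀ i, RetractableOn δ (π ⁻¹' {i})) ∧
        (∀ i, ∃ K : Set A, K ⊆ π ⁻¹' {i} ∧ IsSubaut δ K ∧
          ∀ C ⊆ π ⁻¹' {i}, IsSubaut δ C → K ⊆ C) ∧
        ∀ i j, ∃ φ : A → A, (∀ a ∈ π ⁻¹' {i}, φ a ∈ π ⁻¹' {j}) ∧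
          ∀ a ∈ π ⁻¹' {i}, ∀ x, φ (δ a x) = δ (φ a) x :=
  stmt_8_general δ
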